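/- arXiv:2106.12332 — 2 statements merged into one kernel-verified Lean document; each statement's English description precedes it below -/
import Mathlib

section
/- In a symmetric mining game (all costs equal to c), a symmetric allocation x^ESA is evolutionary stable if and only if all individual griefing factors with respect to x^ESA are strictly less than 1, i.e., for all i ≠ j and all x' ≠ x^ESA, GF_{ij}((x', x^ESA_{-i}); x^ESA) := [Π_j(x^ESA) − Π_j(x', x^ESA_{-i})] / [Π_i(x^ESA) − Π_i(x', x^ESA_{-i})] < 1. -/
open Finset

/-- Payoff of miner `i` in the symmetric mining game with common cost `c`. -/
noncomputable def payoff {n : ℕ} (c : ℝ) (x : Fin n → ℝ) (i : Fin n) : ℝ :=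
  x i / (∑ j, x j) - c * x i

/-- in a symmetric mining game, a symmetric allocation `xE` is
evolutionary stable iff all individual griefing factors w.r.t. `xE` are `< 1`. -/
theorem esa_iff_not_individually_griefable (n : ℕ) (hn : 2 ≤ n) (c : ℝ) (hc : 0 < c)
    (xE : ℝ) (hxE : 0 < xE)
    (hdenom : ∀ i : Fin n, ∀ x' : ℝ, 0 ≤ x' → x' ≠ xE →
      payoff c (Function.update (fun _ : Fin n => xE) i x') i
        < payoff c (fun _ : Fin n => xE) i) :
    ((∀ i j : Fin n, j ≠ i → ∀ x' : ℝ, 0 ≤ x' → x' ≠ xE →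
        payoff c (Function.update (fun _ : Fin n => xE) i x') i
          < payoff c (Function.update (fun _ : Fin n => xE) i x') j)
      ↔
      (∀ i j : Fin n, j ≠ i → ∀ x' : ℝ, 0 ≤ x' → x' ≠ xE →
        (payoff c (fun _ : Fin n => xE) j
            - payoff c (Function.update (fun _ : Fin n => xE) i x') j)
          / (payoff c (fun _ : Fin n => xE) i
            - payoff c (Function.update (fun _ : Fin n => xE) i x') i) < 1)) := by
  have hsym : ∀ i j : Fin n, payoff c (fun _ : Fin n => xE) j
      = payoff c (fun _ : Fin n => xE) i := by
    intro i j; simp [payoff]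
  constructor
  · intro h i j hji x' hx0 hxne
    have hd : 0 < payoff c (fun _ : Fin n => xE) i
        - payoff c (Function.update (fun _ : Fin n => xE) i x') i :=
      sub_pos.mpr (hdenom i x' hx0 hxne)
    rw [div_lt_one hd, hsym i j]
    have := h i j hji x' hx0 hxne
    linarith
  · intro h i j hji x' hx0 hxne
    have hd : 0 < payoff c (fun _ : Fin n => xE) i
        - payoff c (Function.update (fun _ : Fin n => xE) i x') i :=
      sub_pos.mpr (hdenom i x' hx0 hxne)
    have := h i j hji x' hx0 hxne
    rw [div_lt_one hd, hsym i j] at this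
    linarith
end

section
/- In a homogeneous mining game (c_i = c for all i), the Nash equilibrium allocation x* = (n−1)/(n²c) is not evolutionary stable: there exists x' ≠ x* such that a miner deviating individually to x' obtains a strictly higher payoff than every non-deviating miner, i.e., Π_i(x', x*_{-i}) − Π_j(x', x*_{-i}) > 0 for all j ≠ i. -/
/-! If every other miner plays `x*` and miner `i` plays `x'`, with total `S`, then
`Π_i − Π_j = (x' − x*) (1/S − c)`. This is positive for any `x' > x*` that keeps `S < 1/c`;
at the Nash point the total is `(n−1)/(nc) < 1/c`, so `x' = 1/(nc)` leaves enough room. -/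

open Finset

theorem sum_update_const {ι : Type*} [Fintype ι] [DecidableEq ι] (y x' : ℝ) (i : ι) :
    ∑ k, Function.update (fun _ : ι => y) i x' k = ((Fintype.card ι : ℝ) - 1) * y + x' := by
  rw [sum_update_of_mem (mem_univ i), sum_const, card_univ_sdiff, card_singleton,
    nsmul_eq_mul, Nat.cast_sub (Fintype.card_pos_iff.2 ⟨i⟩), Nat.cast_one]
  ring

section Deviation

variable {n : ℕ} (c y x' : ℝ) (i : Fin n)

theorem payoff_update_sub_payoff {j : Fin n} (hj : j ≠ i) :
    payoff c (Function.update (fun _ => y) i x') i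
        - payoff c (Function.update (fun _ => y) i x') j
      = (x' - y) * ((((n : ℝ) - 1) * y + x')⁻¹ - c) := by
  simp only [payoff, Function.update_self, Function.update_of_ne hj, sum_update_const,
    Fintype.card_fin]
  ring

theorem payoff_update_sub_payoff_pos {j : Fin n} (hj : j ≠ i) (hy : y < x')
    (hS : 0 < ((n : ℝ) - 1) * y + x') (hSc : ((n : ℝ) - 1) * y + x' < c⁻¹) :
    0 < payoff c (Function.update (fun _ => y) i x') i
        - payoff c (Function.update (fun _ => y) i x') j := by
  rw [payoff_update_sub_payoff c y x' i hj]
  refine mul_pos (sub_pos.2 hy) (sub_pos.2 ?_)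
  have hc : 0 < c := inv_pos.1 (hS.trans hSc)
  exact (lt_inv_comm₀ hS hc).1 hSc

end Deviation

theorem nash_not_evolutionary_stable_general (n : ℕ) (c : ℝ) (hc : 0 < c)
    (xstar : ℝ) (hx : xstar = ((n : ℝ) - 1) / ((n : ℝ) ^ 2 * c)) (i : Fin n) :
    ∃ x' : ℝ, 0 ≤ x' ∧ x' ≠ xstar ∧
      ∀ j : Fin n, j ≠ i →
        0 < payoff c (Function.update (fun _ : Fin n => xstar) i x') i
            - payoff c (Function.update (fun _ : Fin n => xstar) i x') j := by
  subst hx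
  have hn : (1 : ℝ) ≤ n := by exact_mod_cast i.pos
  have hlt : ((n : ℝ) - 1) / ((n : ℝ) ^ 2 * c) < 1 / (n * c) := by
    rw [div_lt_div_iff₀ (by positivity) (by positivity)]
    nlinarith [mul_pos (by positivity : (0 : ℝ) < n ^ 2) hc]
  refine ⟨1 / (n * c), by positivity, hlt.ne', fun j hj => ?_⟩
  have hn2 : (2 : ℝ) ≤ n := by exact_mod_cast Fin.nontrivial_iff_two_le.1 ⟨⟨j, i, hj⟩⟩
  have htotal : ((n : ℝ) - 1) * (((n : ℝ) - 1) / ((n : ℝ) ^ 2 * c)) + 1 / (n * c)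
      = ((n : ℝ) ^ 2 - n + 1) / ((n : ℝ) ^ 2 * c) := by
    field_simp
    ring
  refine payoff_update_sub_payoff_pos c _ _ i hj hlt ?_ ?_ <;> rw [htotal]
  · exact div_pos (by nlinarith) (by positivity)
  · rw [div_lt_iff₀ (by positivity)]
    field_simp
    linarith

/-- in the homogeneous mining game the Nash equilibrium
`x* = (n−1)/(n²c)` is not evolutionary stable: any miner `i` has a deviation
`x' ≠ x*` giving them a strictly higher payoff than every non-deviating miner. -/
theorem nash_not_evolutionary_stable (n : ℕ) (hn : 2 ≤ n) (c : ℝ) (hc : 0 < c)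
    (xstar : ℝ) (hx : xstar = ((n : ℝ) - 1) / ((n : ℝ) ^ 2 * c)) (i : Fin n) :
    ∃ x' : ℝ, 0 ≤ x' ∧ x' ≠ xstar ∧
      ∀ j : Fin n, j ≠ i →
        0 < payoff c (Function.update (fun _ : Fin n => xstar) i x') i
            - payoff c (Function.update (fun _ : Fin n => xstar) i x') j :=
  nash_not_evolutionary_stable_general n c hc xstar hx i
end
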